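/- Let f, g : ℕ → ℕ satisfy n = o(f(n)) and g(n) = o(n²) as n → ∞, and let l : ℕ → ℕ satisfy f(n) ≤ l(n) ≤ g(n) for all n. Then r(l(n)) ~ l(n)²/(2·α_n) as n → ∞, i.e. the ratio r(l(n))·2·α_n / l(n)² tends to 1. -/

import Mathlib

/-- The vertices of `G(n,3,1)`: 3-element subsets of `{1, …, n}`. -/
abbrev Vtx (n : ℕ) := {s : Finset ℕ // s ⊆ Finset.Icc 1 n ∧ s.card = 3}

/-- The graph `G(n,3,1)`: two 3-element subsets of `{1, …, n}` are adjacent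
iff they intersect in exactly one element. -/
def G (n : ℕ) : SimpleGraph (Vtx n) where
  Adj a b := (a.1 ∩ b.1).card = 1
  symm := ⟨by intro a b h; (try dsimp only at h ⊢); rwa [Finset.inter_comm]⟩
  loopless := ⟨by intro a h; (try dsimp only at h); rw [Finset.inter_self, a.2.2] at h; omega⟩

instance (n : ℕ) : DecidableRel (G n).Adj := fun a b =>
  inferInstanceAs (Decidable ((a.1 ∩ b.1).card = 1))

instance (n : ℕ) : Fintype (Vtx n) :=
  Fintype.subtype ((Finset.Icc 1 n).powerset.filter fun s => s.card = 3) (by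
    intro s
    simp [Finset.mem_powerset, and_comm])

instance (n : ℕ) (s : Set (Vtx n)) : DecidableRel ((G n).induce s).Adj := fun a b =>
  inferInstanceAs (Decidable (((a : Vtx n).1 ∩ (b : Vtx n).1).card = 1))

/-- The number of edges of `G(n,3,1)` with both endpoints in `W`. -/
def edgesIn (n : ℕ) (W : Finset (Vtx n)) : ℕ :=
  ((G n).induce (W : Set (Vtx n))).edgeFinset.card

/-- The independence number of `G(n,3,1)`. -/
noncomputable def alpha (n : ℕ) : ℕ :=
  sSup {k | ∃ W : Finset (Vtx n), W.card = k ∧ ∀ u ∈ W, ∀ v ∈ W, ¬ (G n).Adj u v}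

/-- The minimal number of edges induced on a vertex subset of cardinality `l`. -/
noncomputable def rmin (n l : ℕ) : ℕ :=
  sInf {m | ∃ W : Finset (Vtx n), W.card = l ∧ edgesIn n W = m}


/-!
An independent set of `G(n,3,1)` is a family of 3-subsets of `{1, …, n}` any two of which meet in
0 or 2 points, so the Oddtown theorem gives `α_n ≤ n`. In any graph whose independent sets have at
most `a` vertices, `m` vertices span at least `m² / (2a) - m / 2` edges: a maximal independent set
dominates the remaining vertices, and induction on the rest gives the bound. Hence
`r(l) · 2α_n / l² ≥ 1 - n / l`.

Conversely, take `s` disjoint pairs and `t` further points (apexes) in `{1, …, n}`; the `s t`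
triples "pair + apex" meet in exactly one point only when they share the apex, so they span fewer
than `t s² / 2` edges. Using `α_n ≤ n` again, with `s t ≈ l` and `t = n - O(l / n)` this gives
`r(l) · 2α_n / l² ≤ (1 + n / l)² / (1 - O(l / n² + 1 / n))`. Both bounds tend to `1` when
`n = o(l)` and `l = o(n²)`.
-/

open Finset

/-- Oddtown: over `ZMod 2` the indicator vectors of the sets are orthonormal, hence linearly
independent. -/
theorem Finset.card_le_of_odd_card_of_even_card_inter {α : Type*} [DecidableEq α]
    (X : Finset α) (S : Finset (Finset α)) (hX : ∀ A ∈ S, A ⊆ X) (hodd : ∀ A ∈ S, Odd #A)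
    (heven : ∀ A ∈ S, ∀ B ∈ S, A ≠ B → Even #(A ∩ B)) : #S ≤ #X := by
  let v : S → X → ZMod 2 := fun A x => if (x : α) ∈ (A : Finset α) then 1 else 0
  have hdot : ∀ A B : S, v A ⬝ᵥ v B = #((A : Finset α) ∩ B) := by
    intro A B
    have hsub : (A : Finset α) ∩ B ⊆ X := inter_subset_left.trans (hX A A.2)
    simp only [v, dotProduct, ite_mul, one_mul, zero_mul, ← ite_and, ← mem_inter]
    rw [sum_coe_sort X (fun x => if x ∈ (A : Finset α) ∩ B then (1 : ZMod 2) else 0),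
      sum_boole, filter_mem_eq_inter, inter_eq_right.mpr hsub]
  have hli : LinearIndependent (ZMod 2) v := by
    rw [Fintype.linearIndependent_iff]
    intro c hc B
    have := congrArg (· ⬝ᵥ v B) hc
    simp only [sum_dotProduct, smul_dotProduct, hdot, zero_dotProduct] at this
    rw [Finset.sum_eq_single B] at this
    · rwa [inter_self, (ZMod.natCast_eq_one_iff_odd).mpr (hodd B B.2), smul_eq_mul, mul_one] at this
    · intro A _ hAB
      rw [(ZMod.natCast_eq_zero_iff_even).mpr (heven A A.2 B B.2 (Subtype.coe_ne_coe.mpr hAB)),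
        smul_zero]
    · simp
  simpa [Module.finrank_fintype_fun_eq_card] using hli.fintype_card_le_finrank

namespace SimpleGraph
variable {V : Type*} (Γ : SimpleGraph V) [DecidableRel Γ.Adj]

def adjPairs (W : Finset V) : Finset (V × V) := (W ×ˢ W).filter fun p => Γ.Adj p.1 p.2

variable {Γ} in
@[simp] lemma mem_adjPairs {W : Finset V} {p : V × V} :
    p ∈ Γ.adjPairs W ↔ p.1 ∈ W ∧ p.2 ∈ W ∧ Γ.Adj p.1 p.2 := by
  simp [adjPairs, and_assoc]

lemma card_adjPairs [DecidableEq V] (W : Finset V) :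
    #(Γ.adjPairs W) = 2 * #(Γ.induce (W : Set V)).edgeFinset := by
  rw [← dart_card_eq_twice_card_edges, ← Fintype.card_coe]
  refine Fintype.card_congr
    { toFun := fun p => ⟨(⟨p.1.1, (mem_adjPairs.1 p.2).1⟩, ⟨p.1.2, (mem_adjPairs.1 p.2).2.1⟩),
        (mem_adjPairs.1 p.2).2.2⟩
      invFun := fun d => ⟨(d.fst.1, d.snd.1), by simpa using d.adj⟩
      left_inv := fun p => rfl
      right_inv := fun d => rfl }

lemma adjPairs_mono {W W' : Finset V} (h : W' ⊆ W) : Γ.adjPairs W' ⊆ Γ.adjPairs W :=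
  filter_subset_filter _ (product_subset_product h h)

lemma exists_isIndepSet_dominating [DecidableEq V] (W : Finset V) :
    ∃ I ⊆ W, Γ.IsIndepSet (I : Set V) ∧ ∀ v ∈ W \ I, ∃ u ∈ I, Γ.Adj v u := by
  obtain ⟨I, hI, hmax⟩ := exists_max_image
    (W.powerset.filter fun J : Finset V => Γ.IsIndepSet (J : Set V)) card
    ⟨∅, by simp⟩
  rw [mem_filter, mem_powerset] at hI
  refine ⟨I, hI.1, hI.2, fun v hv => ?_⟩
  rw [mem_sdiff] at hv
  by_contra! hnb
  have hins : insert v I ∈ W.powerset.filter fun J : Finset V => Γ.IsIndepSet (J : Set V) := by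
    rw [mem_filter, mem_powerset, coe_insert, IsIndepSet, Set.pairwise_insert]
    exact ⟨insert_subset hv.1 hI.1, hI.2, fun u hu _ => ⟨hnb u hu, fun h => hnb u hu h.symm⟩⟩
  have := hmax _ hins
  rw [card_insert_of_notMem hv.2] at this
  omega

lemma card_adjPairs_add_two_mul_le [DecidableEq V] {A I : Finset V} (hAI : Disjoint A I)
    (hdom : ∀ v ∈ A, ∃ u ∈ I, Γ.Adj v u) :
    #(Γ.adjPairs A) + 2 * #A ≤ #(Γ.adjPairs (A ∪ I)) := by
  choose! nb hnbI hnbAdj using hdom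
  have hA : ∀ v ∈ A, v ∉ I := fun v hv => Finset.disjoint_left.1 hAI hv
  have hout : #(A.image fun v => (v, nb v)) = #A :=
    card_image_of_injective _ fun v w h => congrArg Prod.fst h
  have hin : #(A.image fun v => (nb v, v)) = #A :=
    card_image_of_injective _ fun v w h => congrArg Prod.snd h
  have hdisj₁ : Disjoint (Γ.adjPairs A) (A.image fun v => (v, nb v)) := by
    simp only [Finset.disjoint_left, mem_adjPairs, mem_image]
    rintro _ ⟨-, hw, -⟩ ⟨v, hv, rfl⟩
    exact hA _ hw (hnbI v hv)
  have hdisj₂ : Disjoint (Γ.adjPairs A ∪ A.image fun v => (v, nb v))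
      (A.image fun v => (nb v, v)) := by
    simp only [Finset.disjoint_left, mem_union, mem_adjPairs, mem_image]
    rintro _ (⟨hu, -, -⟩ | ⟨v, hv, rfl⟩) ⟨w, hw, h⟩
    · rw [← h] at hu; exact hA _ hu (hnbI w hw)
    · rw [Prod.mk.injEq] at h; rw [h.2] at hw; exact hA _ hw (hnbI v hv)
  calc #(Γ.adjPairs A) + 2 * #A
      = #(Γ.adjPairs A ∪ (A.image fun v => (v, nb v)) ∪ A.image fun v => (nb v, v)) := by
        rw [card_union_of_disjoint hdisj₂, card_union_of_disjoint hdisj₁, hout, hin]; ring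
    _ ≤ #(Γ.adjPairs (A ∪ I)) := by
        refine card_le_card (union_subset (union_subset (adjPairs_mono Γ subset_union_left) ?_) ?_)
        all_goals
          simp only [subset_iff, mem_image, mem_adjPairs, mem_union]
          rintro _ ⟨v, hv, rfl⟩
        · exact ⟨.inl hv, .inr (hnbI v hv), hnbAdj v hv⟩
        · exact ⟨.inr (hnbI v hv), .inl hv, (hnbAdj v hv).symm⟩

lemma sq_card_le_mul_of_isIndepSet_card_le {a : ℕ}
    (ha : ∀ I : Finset V, Γ.IsIndepSet (I : Set V) → #I ≤ a) (W : Finset V) :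
    #W ^ 2 ≤ a * (#(Γ.adjPairs W) + #W) := by
  classical
  induction W using Finset.strongInduction with
  | H W ih =>
  obtain ⟨I, hIW, hI, hdom⟩ := Γ.exists_isIndepSet_dominating W
  rcases I.eq_empty_or_nonempty with rfl | hIne
  · obtain rfl : W = ∅ := eq_empty_of_forall_notMem fun v hv => by simpa using hdom v (by simpa)
    simp
  have hAW : W \ I ⊂ W := sdiff_ssubset hIW hIne
  have hsplit := Γ.card_adjPairs_add_two_mul_le sdiff_disjoint hdom
  rw [sdiff_union_of_subset hIW] at hsplit
  have hcard : #(W \ I) + #I = #W := card_sdiff_add_card_eq_card hIW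
  have hIa := ha I hI
  have := ih _ hAW
  nlinarith

lemma card_adjPairs_image_le {ι : Type*} [DecidableEq V] (φ : ι → V) (T : Finset ι) :
    #(Γ.adjPairs (T.image φ)) ≤ #((T ×ˢ T).filter fun pq => Γ.Adj (φ pq.1) (φ pq.2)) := by
  refine (card_le_card fun uv h => ?_).trans (card_image_le (f := Prod.map φ φ))
  obtain ⟨u, v⟩ := uv
  obtain ⟨⟨p, hp, rfl⟩, ⟨q, hq, rfl⟩, hadj⟩ := by simpa only [mem_adjPairs, mem_image] using h
  exact mem_image.2 ⟨(p, q), by simp [hp, hq, hadj], rfl⟩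

end SimpleGraph

lemma card_adjPairs_eq_two_mul_edgesIn (n : ℕ) (W : Finset (Vtx n)) :
    #((G n).adjPairs W) = 2 * edgesIn n W :=
  (G n).card_adjPairs W

lemma even_card_inter_of_not_adj {n : ℕ} {u v : Vtx n} (huv : u ≠ v) (h : ¬ (G n).Adj u v) :
    Even #(u.1 ∩ v.1) := by
  have hu := u.2.2
  have hv := v.2.2
  have hle : #(u.1 ∩ v.1) ≤ 3 := (card_le_card inter_subset_left).trans hu.le
  have hne3 : #(u.1 ∩ v.1) ≠ 3 := fun h3 => huv <| Subtype.ext <|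
    (eq_of_subset_of_card_le inter_subset_left (by omega)).symm.trans
      (eq_of_subset_of_card_le inter_subset_right (by omega))
  have hne1 : #(u.1 ∩ v.1) ≠ 1 := h
  interval_cases h : #(u.1 ∩ v.1) <;> simp_all

lemma card_le_alpha {n : ℕ} {I : Finset (Vtx n)} (hI : (G n).IsIndepSet (I : Set (Vtx n))) :
    #I ≤ alpha n :=
  le_csSup ⟨Fintype.card (Vtx n), by rintro _ ⟨W, rfl, -⟩; exact card_le_univ W⟩
    ⟨I, rfl, fun u hu v hv => by
      rcases eq_or_ne u v with rfl | huv
      · exact (G n).loopless.irrefl u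
      · exact hI hu hv huv⟩

lemma alpha_le (n : ℕ) : alpha n ≤ n := by
  refine csSup_le ⟨0, ∅, by simp⟩ ?_
  rintro _ ⟨W, rfl, hW⟩
  rw [← card_map (Function.Embedding.subtype _)]
  refine (card_le_of_odd_card_of_even_card_inter (Icc 1 n) _ ?_ ?_ ?_).trans (by simp)
  all_goals simp only [forall_mem_map, Function.Embedding.coe_subtype]
  · exact fun v _ => v.2.1
  · exact fun v _ => by rw [v.2.2]; decide
  · exact fun u hu v hv huv => even_card_inter_of_not_adj (ne_of_apply_ne _ huv) (hW u hu v hv)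

/-- The `i`-th of `s` disjoint pairs `{2i+1, 2i+2}` together with the `c`-th apex `2s+1+c`. -/
def triple (s i c : ℕ) : Finset ℕ := {2 * i + 1, 2 * i + 2, 2 * s + 1 + c}

lemma mem_triple {s i c x : ℕ} :
    x ∈ triple s i c ↔ x = 2 * i + 1 ∨ x = 2 * i + 2 ∨ x = 2 * s + 1 + c := by
  simp [triple]

lemma card_triple {s i c : ℕ} (hi : i < s) : #(triple s i c) = 3 := by
  rw [triple, card_insert_of_notMem (by simp; omega), card_insert_of_notMem (by simp; omega),
    card_singleton]

lemma triple_injective {s i i' c c' : ℕ} (hi : i < s) (hi' : i' < s)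
    (h : triple s i c = triple s i' c') : i = i' ∧ c = c' := by
  have h₁ : 2 * i + 1 ∈ triple s i' c' := h ▸ mem_triple.2 (.inl rfl)
  have h₂ : 2 * s + 1 + c ∈ triple s i' c' := h ▸ mem_triple.2 (.inr (.inr rfl))
  rw [mem_triple] at h₁ h₂
  omega

lemma eq_of_card_inter_triple_eq_one {s i i' c c' : ℕ} (hi : i < s) (hi' : i' < s)
    (h : #(triple s i c ∩ triple s i' c') = 1) : c = c' := by
  by_contra hc
  rcases eq_or_ne i i' with rfl | hii
  · have : triple s i c ∩ triple s i c' = {2 * i + 1, 2 * i + 2} := by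
      ext x; simp only [mem_inter, mem_triple, mem_insert, mem_singleton]; omega
    rw [this, card_pair (by omega)] at h
    omega
  · have : triple s i c ∩ triple s i' c' = ∅ := by
      ext x; simp only [mem_inter, mem_triple, notMem_empty, iff_false]; omega
    simp [this] at h

def tripleVtx {n s t : ℕ} (hst : 2 * s + t ≤ n) (p : Fin s × Fin t) : Vtx n :=
  ⟨triple s p.1 p.2, fun x hx => by rw [mem_triple] at hx; rw [mem_Icc]; omega,
    card_triple p.1.2⟩

lemma tripleVtx_injective {n s t : ℕ} (hst : 2 * s + t ≤ n) :
    Function.Injective (tripleVtx hst) := fun p q h => by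
  obtain ⟨h₁, h₂⟩ := triple_injective p.1.2 q.1.2 (congrArg Subtype.val h)
  exact Prod.ext (Fin.ext h₁) (Fin.ext h₂)

lemma card_adjPairs_image_tripleVtx_le {n s t : ℕ} (hst : 2 * s + t ≤ n) :
    #((G n).adjPairs (univ.image (tripleVtx hst))) ≤ s * t * s := by
  refine ((G n).card_adjPairs_image_le _ _).trans ?_
  calc _ ≤ #(univ : Finset (Fin s × Fin t × Fin s)) :=
        card_le_card_of_injOn (fun pq => (pq.1.1, pq.1.2, pq.2.1)) (by simp)
          fun pq hpq pq' hpq' h => by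
          simp only [coe_filter, Set.mem_ofPred_eq, mem_product, mem_univ, true_and] at hpq hpq'
          have e := eq_of_card_inter_triple_eq_one pq.1.1.2 pq.2.1.2 hpq
          have e' := eq_of_card_inter_triple_eq_one pq'.1.1.2 pq'.2.1.2 hpq'
          simp only [Prod.mk.injEq] at h
          ext <;> simp_all [Fin.ext_iff]
    _ = s * t * s := by simp [mul_assoc]

lemma exists_card_eq_two_mul_edgesIn_le {n s t L : ℕ} (hst : 2 * s + t ≤ n) (hL : L ≤ s * t) :
    ∃ W : Finset (Vtx n), #W = L ∧ 2 * edgesIn n W ≤ s * t * s := by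
  have hcard : #(univ.image (tripleVtx hst)) = s * t := by
    rw [card_image_of_injective _ (tripleVtx_injective hst)]; simp
  obtain ⟨W, hW, rfl⟩ := exists_subset_card_eq (hcard ▸ hL)
  refine ⟨W, rfl, ?_⟩
  rw [← card_adjPairs_eq_two_mul_edgesIn]
  exact (card_le_card ((G n).adjPairs_mono hW)).trans (card_adjPairs_image_tripleVtx_le hst)

lemma sq_le_alpha_mul_rmin {n L : ℕ} (hW : ∃ W : Finset (Vtx n), #W = L) :
    L ^ 2 ≤ alpha n * (2 * rmin n L + L) := by
  obtain ⟨W, rfl, hWe⟩ := Nat.sInf_mem (s := {m | ∃ W : Finset (Vtx n), #W = L ∧ edgesIn n W = m})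
    (by obtain ⟨W, hW⟩ := hW; exact ⟨_, W, hW, rfl⟩)
  have := (G n).sq_card_le_mul_of_isIndepSet_card_le (fun I hI => card_le_alpha hI) W
  rwa [card_adjPairs_eq_two_mul_edgesIn, hWe] at this

lemma two_mul_rmin_le {n s t L : ℕ} (hst : 2 * s + t ≤ n) (hL : L ≤ s * t) :
    2 * rmin n L ≤ s * t * s := by
  obtain ⟨W, hW, hWe⟩ := exists_card_eq_two_mul_edgesIn_le hst hL
  have : rmin n L ≤ edgesIn n W := Nat.sInf_le ⟨W, hW, rfl⟩
  omega

lemma one_sub_div_le_rmin_mul_alpha_div {n L : ℕ} (hL : 0 < L)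
    (hW : ∃ W : Finset (Vtx n), #W = L) :
    1 - (n : ℝ) / L ≤ (rmin n L : ℝ) * (2 * (alpha n : ℝ)) / (L : ℝ) ^ 2 := by
  have hsq : (L : ℝ) ^ 2 ≤ alpha n * (2 * rmin n L + L) := by exact_mod_cast sq_le_alpha_mul_rmin hW
  have hα : (alpha n : ℝ) ≤ n := by exact_mod_cast alpha_le n
  have hL' : (0 : ℝ) < L := by exact_mod_cast hL
  have hexp : (1 - (n : ℝ) / L) * (L : ℝ) ^ 2 = (L : ℝ) ^ 2 - n * L := by field_simp
  rw [le_div_iff₀ (by positivity), hexp]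
  nlinarith

/-- With `u = ⌊2L/n⌋ + 1`, take `t = n - 2u` apexes and `s = ⌊L/t⌋ + 1` pairs; `n ≤ 2t` forces
`s ≤ u`. -/
lemma exists_construction_params {n L : ℕ} (h : 4 * (2 * L / n + 1) ≤ n) :
    ∃ s t : ℕ, 2 * s + t ≤ n ∧ L ≤ s * t ∧ s * t ≤ L + t ∧ n ≤ t + 2 * (2 * L / n + 1) := by
  -- `omega` rejects division by a variable, so the quotient is named
  obtain ⟨q, hq⟩ : ∃ q, 2 * L / n = q := ⟨_, rfl⟩
  rw [hq] at h ⊢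
  obtain ⟨t, ht⟩ : ∃ t, n - 2 * (q + 1) = t := ⟨_, rfl⟩
  have hLt : L / t * t ≤ L := Nat.div_mul_le_self L t
  have hLt' : L < L / t * t + t := Nat.lt_div_mul_add (by omega)
  have hs : L / t ≤ q := by
    rw [← hq, Nat.le_div_iff_mul_le (show 0 < n by omega)]
    calc L / t * n ≤ L / t * t * 2 := by rw [mul_assoc]; exact Nat.mul_le_mul_left _ (by omega)
      _ ≤ 2 * L := by omega
  refine ⟨L / t + 1, t, by omega, ?_, ?_, by omega⟩ <;> rw [add_mul, one_mul] <;> omega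

lemma rmin_mul_alpha_div_le {n s t L : ℕ} (hst : 2 * s + t ≤ n) (hLst : L ≤ s * t)
    (hstL : s * t ≤ L + t) (hL : 0 < L) (ht : 0 < t) :
    (rmin n L : ℝ) * (2 * (alpha n : ℝ)) / (L : ℝ) ^ 2 ≤ n / t * (1 + (n : ℝ) / L) ^ 2 := by
  have hL' : (0 : ℝ) < L := by exact_mod_cast hL
  have ht' : (0 : ℝ) < t := by exact_mod_cast ht
  have hrmin : (rmin n L : ℝ) * (2 * alpha n) ≤ n / t * ((s * t : ℕ) : ℝ) ^ 2 := by
    rw [div_mul_eq_mul_div, le_div_iff₀ ht']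
    have := Nat.mul_le_mul (two_mul_rmin_le hst hLst) (alpha_le n)
    exact_mod_cast (by nlinarith : rmin n L * (2 * alpha n) * t ≤ n * (s * t) ^ 2)
  have hstn : ((s * t : ℕ) : ℝ) ≤ L + n := by
    have : s * t ≤ L + n := by omega
    exact_mod_cast this
  calc (rmin n L : ℝ) * (2 * (alpha n : ℝ)) / (L : ℝ) ^ 2
      ≤ n / t * ((s * t : ℕ) : ℝ) ^ 2 / (L : ℝ) ^ 2 := by gcongr
    _ ≤ n / t * (L + n) ^ 2 / (L : ℝ) ^ 2 := by gcongr
    _ = n / t * (1 + n / L) ^ 2 := by field_simp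

lemma rmin_mul_alpha_div_mem_Icc {n L : ℕ} (hn : 0 < n) (hL : 0 < L)
    (hε : 4 * (L : ℝ) / n ^ 2 + 2 / n ≤ 1 / 2) :
    (rmin n L : ℝ) * (2 * (alpha n : ℝ)) / (L : ℝ) ^ 2 ∈
      Set.Icc (1 - (n : ℝ) / L) ((1 + (n : ℝ) / L) ^ 2 / (1 - (4 * (L : ℝ) / n ^ 2 + 2 / n))) := by
  set ε := 4 * (L : ℝ) / n ^ 2 + 2 / n with hε_def
  have hn' : (0 : ℝ) < n := by exact_mod_cast hn
  have hq : ((2 * L / n : ℕ) : ℝ) ≤ 2 * L / n := by exact_mod_cast Nat.cast_div_le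
  have hnε : (n : ℝ) * (1 - ε) = n - 2 * (2 * L / n) - 2 := by rw [hε_def]; field_simp; ring
  have hroom : 4 * (2 * L / n + 1) ≤ n := by
    have : ((4 * (2 * L / n + 1) : ℕ) : ℝ) ≤ n := by
      push_cast
      nlinarith [mul_le_mul_of_nonneg_left hε hn'.le]
    exact_mod_cast this
  obtain ⟨s, t, hst, hLst, hstL, hnt⟩ := exists_construction_params hroom
  obtain ⟨W, hW, -⟩ := exists_card_eq_two_mul_edgesIn_le hst hLst
  refine ⟨one_sub_div_le_rmin_mul_alpha_div hL ⟨W, hW⟩, ?_⟩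
  have ht : (n : ℝ) * (1 - ε) ≤ t := by
    have : (n : ℝ) ≤ t + 2 * ((2 * L / n : ℕ) + 1) := by exact_mod_cast hnt
    rw [hnε]; linarith
  have hε1 : 0 < 1 - ε := by linarith
  have ht' : (0 : ℝ) < t := lt_of_lt_of_le (by positivity) ht
  have hnt' : (n : ℝ) / t ≤ 1 / (1 - ε) := by rw [div_le_div_iff₀ ht' hε1]; linarith
  calc _ ≤ n / t * (1 + (n : ℝ) / L) ^ 2 :=
        rmin_mul_alpha_div_le hst hLst hstL hL (by exact_mod_cast ht')
    _ ≤ 1 / (1 - ε) * (1 + (n : ℝ) / L) ^ 2 := by gcongr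
    _ = _ := by ring

lemma eventually_pos_of_isLittleO {f : ℕ → ℕ}
    (hf : (fun n : ℕ => (n : ℝ)) =o[Filter.atTop] fun n => (f n : ℝ)) :
    ∀ᶠ n in Filter.atTop, 0 < f n := by
  filter_upwards [hf.bound one_pos, Filter.eventually_ge_atTop 1] with n hn h1
  have hn' : (n : ℝ) ≤ f n := by simpa using hn
  exact Nat.one_le_cast.mp ((Nat.one_le_cast.mpr h1).trans hn')

lemma tendsto_natCast_div_nhds_zero_of_isLittleO {f l : ℕ → ℕ}
    (hf : (fun n : ℕ => (n : ℝ)) =o[Filter.atTop] fun n => (f n : ℝ)) (hfl : ∀ n, f n ≤ l n) :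
    Filter.Tendsto (fun n : ℕ => (n : ℝ) / l n) Filter.atTop (nhds 0) := by
  refine squeeze_zero' (.of_forall fun n => by positivity) ?_ hf.tendsto_div_nhds_zero
  filter_upwards [eventually_pos_of_isLittleO hf] with n hn
  exact div_le_div_of_nonneg_left (by positivity) (by exact_mod_cast hn) (by exact_mod_cast hfl n)

open Filter in
/-- If `n = o(f(n))`, `g(n) = o(n²)` and `f(n) ≤ l(n) ≤ g(n)` for all `n`, then
`r(l(n)) ~ l(n)² / (2 α_n)` as `n → ∞`. -/
theorem stmt_3 (f g l : ℕ → ℕ)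
    (hf : (fun n : ℕ => (n : ℝ)) =o[atTop] fun n => (f n : ℝ))
    (hg : (fun n => (g n : ℝ)) =o[atTop] fun n : ℕ => (n : ℝ) ^ 2)
    (hl : ∀ n, f n ≤ l n ∧ l n ≤ g n) :
    Tendsto (fun n => (rmin n (l n) : ℝ) * (2 * (alpha n : ℝ)) / (l n : ℝ) ^ 2)
      atTop (nhds 1) := by
  have hnl := tendsto_natCast_div_nhds_zero_of_isLittleO hf fun n => (hl n).1
  have hln : Tendsto (fun n : ℕ => (l n : ℝ) / n ^ 2) atTop (nhds 0) :=
    squeeze_zero (fun n => by positivity)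
      (fun n => div_le_div_of_nonneg_right (by exact_mod_cast (hl n).2) (by positivity))
      hg.tendsto_div_nhds_zero
  have hε : Tendsto (fun n : ℕ => 4 * (l n : ℝ) / n ^ 2 + 2 / n) atTop (nhds 0) := by
    simpa [mul_div_assoc] using (hln.const_mul 4).add (tendsto_const_div_atTop_nhds_zero_nat 2)
  have hlower : Tendsto (fun n : ℕ => 1 - (n : ℝ) / l n) atTop (nhds 1) := by
    simpa using hnl.const_sub 1
  have hupper : Tendsto (fun n : ℕ => (1 + (n : ℝ) / l n) ^ 2 /
      (1 - (4 * (l n : ℝ) / n ^ 2 + 2 / n))) atTop (nhds 1) := by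
    simpa [Pi.div_def] using ((hnl.const_add 1).pow 2).div (hε.const_sub 1) (by norm_num)
  have hbounds := (eventually_ge_atTop 1).and <|
    (eventually_pos_of_isLittleO hf).and <| hε.eventually (ge_mem_nhds one_half_pos)
  refine tendsto_of_tendsto_of_tendsto_of_le_of_le' hlower hupper ?_ ?_ <;>
    filter_upwards [hbounds] with n ⟨hn, hfn, hεn⟩
  exacts [(rmin_mul_alpha_div_mem_Icc hn (hfn.trans_le (hl n).1) hεn).1,
    (rmin_mul_alpha_div_mem_Icc hn (hfn.trans_le (hl n).1) hεn).2]
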